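/- Let q ∈ ℂ, q ≠ 0, let f, P ∈ ℂ((x)) with P ≠ 0 satisfy x·σ_q(f) + f = P, and let n ≥ 1. Define P₀ = 0, P_k = ∑_{j=0}^{k-1}(−x σ_q)ʲ P. Then the n-th order q-difference operator L = (1/P_n)(x σ_q + 1)(1/P_{n−1})(x² σ_q − 1) ⋯ (1/P₁)(xⁿ σ_q − (−1)ⁿ) applied to fⁿ gives L(fⁿ) = (−1)^{n(n−1)/2}. -/

import Mathlib

noncomputable section

/-- The `q`-dilation operator `σ_q` on formal Laurent series: `(σ_q f)(x) = f(qx)`,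
i.e. the coefficient of `xⁿ` is multiplied by `qⁿ`. -/
def sigmaq (q : ℂ) (f : LaurentSeries ℂ) : LaurentSeries ℂ :=
  ⟨fun n => q ^ n * f.coeff n,
    f.isPWO_support'.mono (by
      intro n hn
      simp only [Function.mem_support] at hn ⊢
      exact fun h => hn (by rw [h, mul_zero]))⟩

/-- `x` as a Laurent series. -/
def Xl : LaurentSeries ℂ := HahnSeries.single 1 1

/-- `P_n = ∑_{k=0}^{n-1} (−x σ_q)ᵏ P` (so `P₀ = 0`). -/
def Pq (q : ℂ) (P : LaurentSeries ℂ) (n : ℕ) : LaurentSeries ℂ :=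
  ∑ k ∈ Finset.range n, (fun g => -Xl * sigmaq q g)^[k] P

/-- The operators `L_{n,k}`: `L_{n,0} = id`,
`L_{n,k+1} = (1/P_{k+1})(x^{n−k} σ_q − (−1)^{n−k}) ∘ L_{n,k}`, so that
`L_{n,n} = (1/P_n)(x σ_q + 1)(1/P_{n−1})(x² σ_q − 1) ⋯ (1/P₁)(xⁿ σ_q − (−1)ⁿ)`. -/
def Lnk (q : ℂ) (P : LaurentSeries ℂ) (n : ℕ) : ℕ → LaurentSeries ℂ → LaurentSeries ℂ
  | 0 => id
  | k + 1 => fun g =>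
      (Pq q P (k + 1))⁻¹ *
        (Xl ^ (n - k) * sigmaq q (Lnk q P n k g)
          - (-1 : LaurentSeries ℂ) ^ (n - k) * Lnk q P n k g)

lemma sigmaq_coeff (q : ℂ) (f : LaurentSeries ℂ) (n : ℤ) :
    (sigmaq q f).coeff n = q ^ n * f.coeff n := rfl

lemma sigmaq_support (q : ℂ) (f : LaurentSeries ℂ) :
    (sigmaq q f).support ⊆ f.support := by
  intro n hn
  simp only [HahnSeries.mem_support, sigmaq_coeff] at hn ⊢
  exact fun h => hn (by rw [h, mul_zero])

lemma sigmaq_add (q : ℂ) (a b : LaurentSeries ℂ) :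
    sigmaq q (a + b) = sigmaq q a + sigmaq q b := by
  ext n
  simp [sigmaq_coeff, mul_add]

lemma sigmaq_one (q : ℂ) : sigmaq q (1 : LaurentSeries ℂ) = 1 := by
  ext n
  rcases eq_or_ne n 0 with rfl | h
  · simp [sigmaq_coeff]
  · simp [sigmaq_coeff, HahnSeries.coeff_one, h]

lemma sigmaq_mul (q : ℂ) (hq : q ≠ 0) (a b : LaurentSeries ℂ) :
    sigmaq q (a * b) = sigmaq q a * sigmaq q b := by
  ext n
  have h1 : (sigmaq q a * sigmaq q b).coeff n
      = ∑ ij ∈ Finset.antidiagonal a.isPWO_support b.isPWO_support n,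
          (sigmaq q a).coeff ij.1 * (sigmaq q b).coeff ij.2 := by
    rw [HahnSeries.coeff_mul]
    refine Finset.sum_subset (Finset.addAntidiagonal_mono_left (sigmaq_support q a) |>.trans
      (Finset.addAntidiagonal_mono_right (sigmaq_support q b))) ?_
    · intro ij hij hnij
      simp only [Finset.mem_antidiagonal, HahnSeries.mem_support] at hij hnij
      by_cases h : (sigmaq q a).coeff ij.1 = 0
      · rw [h, zero_mul]
      by_cases h2 : (sigmaq q b).coeff ij.2 = 0
      · rw [h2, mul_zero]
      exact absurd ⟨h, h2, hij.2.2⟩ hnij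
  rw [h1, sigmaq_coeff, HahnSeries.coeff_mul, Finset.mul_sum]
  refine Finset.sum_congr rfl ?_
  intro ij hij
  simp only [Finset.mem_antidiagonal] at hij
  rw [sigmaq_coeff, sigmaq_coeff, ← hij.2.2, zpow_add₀ hq]
  ring

def sigmaR (q : ℂ) (hq : q ≠ 0) : LaurentSeries ℂ →+* LaurentSeries ℂ where
  toFun := sigmaq q
  map_one' := sigmaq_one q
  map_mul' := sigmaq_mul q hq
  map_zero' := by ext n; simp [sigmaq_coeff]
  map_add' := sigmaq_add q


def hh (w : ℕ → LaurentSeries ℂ) : ℕ → ℕ → LaurentSeries ℂ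
  | _, 0 => 1
  | 0, m + 1 => w 0 * hh w 0 m
  | k + 1, m + 1 => hh w k (m + 1) + w (k + 1) * hh w (k + 1) m
  termination_by k m => (k, m)

lemma hh_zero (w : ℕ → LaurentSeries ℂ) (k : ℕ) : hh w k 0 = 1 := by
  cases k <;> rw [hh]

lemma hh_zs (w : ℕ → LaurentSeries ℂ) (m : ℕ) : hh w 0 (m + 1) = w 0 * hh w 0 m := by
  rw [hh]

lemma hh_ss (w : ℕ → LaurentSeries ℂ) (k m : ℕ) :
    hh w (k + 1) (m + 1) = hh w k (m + 1) + w (k + 1) * hh w (k + 1) m := by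
  conv_lhs => rw [hh]

lemma hh_zero_var (w : ℕ → LaurentSeries ℂ) (m : ℕ) : hh w 0 m = w 0 ^ m := by
  induction m with
  | zero => rw [hh_zero, pow_zero]
  | succ m ih => rw [hh_zs, ih, pow_succ]; ring

lemma hh_diff (w : ℕ → LaurentSeries ℂ) :
    ∀ k m, hh (fun j => w (j + 1)) k (m + 1) - hh w k (m + 1)
      = (w (k + 1) - w 0) * hh w (k + 1) m := by
  intro k
  induction k with
  | zero =>
    intro m
    induction m with
    | zero =>
      simp only [hh_zero_var, hh_zero]
      ring
    | succ m ih =>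
      rw [hh_ss w 0 m]
      simp only [hh_zero_var] at ih ⊢
      linear_combination (w 1) * ih
  | succ k ihk =>
    intro m
    induction m with
    | zero =>
      have h0 := ihk 0
      rw [hh_ss _ k 0, hh_ss w k 0]
      simp only [hh_zero] at h0 ⊢
      linear_combination h0
    | succ m ihm =>
      rw [hh_ss _ k (m+1), hh_ss w k (m+1), hh_ss w (k+1) m]
      linear_combination ihk (m + 1) + (w (k + 2)) * ihm

lemma hh_sigma (q : ℂ) (hq : q ≠ 0) (w : ℕ → LaurentSeries ℂ)
    (hw : ∀ j, Xl * sigmaq q (w j) = -(w (j + 1))) :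
    ∀ k m, Xl ^ m * sigmaq q (hh w k m) = (-1 : LaurentSeries ℂ) ^ m * hh (fun j => w (j + 1)) k m := by
  intro k
  induction k with
  | zero =>
    intro m
    induction m with
    | zero => simp [hh_zero, sigmaq_one]
    | succ m ih =>
      rw [hh_zs w m, sigmaq_mul q hq, hh_zs (fun j => w (j + 1)) m]
      linear_combination (Xl ^ m * sigmaq q (hh w 0 m)) * hw 0 + (-(w 1)) * ih
  | succ k ihk =>
    intro m
    induction m with
    | zero => simp [hh_zero, sigmaq_one]
    | succ m ihm =>
      rw [hh_ss w k m, sigmaq_add, sigmaq_mul q hq, hh_ss (fun j => w (j + 1)) k m]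
      linear_combination ihk (m + 1) + (Xl ^ m * sigmaq q (hh w (k + 1) m)) * hw (k + 1)
        + (-(w (k + 2))) * ihm
def vv (q : ℂ) (f : LaurentSeries ℂ) (j : ℕ) : LaurentSeries ℂ :=
  (fun g => -Xl * sigmaq q g)^[j] f

lemma vv_zero (q : ℂ) (f : LaurentSeries ℂ) : vv q f 0 = f := rfl

lemma vv_succ (q : ℂ) (f : LaurentSeries ℂ) (j : ℕ) :
    vv q f (j + 1) = -Xl * sigmaq q (vv q f j) :=
  Function.iterate_succ_apply' _ _ _

lemma Pq_zero (q : ℂ) (P : LaurentSeries ℂ) : Pq q P 0 = 0 := by simp [Pq]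


lemma negXl_mul_coeff (t : LaurentSeries ℂ) (m : ℤ) :
    (-Xl * t).coeff m = -(t.coeff (m - 1)) := by
  have h : -Xl * t = -(Xl * t) := neg_mul Xl t
  have h2 : (Xl * t).coeff m = t.coeff (m - 1) := by
    have := HahnSeries.coeff_single_mul_add (r := (1 : ℂ)) (x := t) (a := m - 1) (b := 1)
    rw [sub_add_cancel] at this
    rw [Xl, this, one_mul]
  rw [h, HahnSeries.coeff_neg, h2]

lemma Pq_succ (q : ℂ) (hq : q ≠ 0) (P : LaurentSeries ℂ) (k : ℕ) :
    Pq q P (k + 1) = P + (-Xl) * sigmaq q (Pq q P k) := by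
  unfold Pq
  rw [Finset.sum_range_succ']
  simp only [Function.iterate_succ_apply', Function.iterate_zero_apply]
  rw [add_comm]
  congr 1
  have hs : sigmaq q (∑ i ∈ Finset.range k, (fun g => -Xl * sigmaq q g)^[i] P)
      = ∑ i ∈ Finset.range k, sigmaq q ((fun g => -Xl * sigmaq q g)^[i] P) :=
    map_sum (sigmaR q hq) _ _
  rw [hs, Finset.mul_sum]

lemma vv_eq (q : ℂ) (hq : q ≠ 0) (f P : LaurentSeries ℂ)
    (hf : Xl * sigmaq q f + f = P) : ∀ k, vv q f k = f - Pq q P k := by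
  intro k
  induction k with
  | zero => rw [vv_zero, Pq_zero, sub_zero]
  | succ k ih =>
    rw [vv_succ, ih, Pq_succ q hq]
    have hsub : sigmaq q (f - Pq q P k) = sigmaq q f - sigmaq q (Pq q P k) :=
      map_sub (sigmaR q hq) _ _
    rw [hsub]
    linear_combination -hf

lemma Pq_coeff_le (q : ℂ) (hq : q ≠ 0) (P : LaurentSeries ℂ) :
    ∀ k, ∀ m : ℤ, m ≤ P.order → (Pq q P (k + 1)).coeff m = P.coeff m := by
  intro k
  induction k with
  | zero =>
    intro m _
    rw [Pq_succ q hq, Pq_zero]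
    have h0 : sigmaq q (0 : LaurentSeries ℂ) = 0 := map_zero (sigmaR q hq)
    rw [h0, mul_zero, add_zero]
  | succ k ih =>
    intro m hm
    rw [Pq_succ q hq, HahnSeries.coeff_add, negXl_mul_coeff, sigmaq_coeff,
      ih (m - 1) (by omega)]
    have hz : P.coeff (m - 1) = 0 := HahnSeries.coeff_eq_zero_of_lt_order (by omega)
    rw [hz, mul_zero, neg_zero, add_zero]

lemma Pq_ne_zero (q : ℂ) (hq : q ≠ 0) (P : LaurentSeries ℂ) (hP : P ≠ 0) (k : ℕ) :
    Pq q P (k + 1) ≠ 0 := by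
  intro h
  have h2 := Pq_coeff_le q hq P k P.order le_rfl
  rw [h] at h2
  exact (HahnSeries.coeff_order_eq_zero.not.2 hP) (by simpa using h2.symm)
def eeaux (n : ℕ) : ℕ → ℕ
  | 0 => 0
  | k + 1 => eeaux n k + (n - k) + 1

/-- Theorem 2.1: if `x σ_q(f) + f = P` with `P ≠ 0`, then
`L_{n,n}(fⁿ) = (−1)^{n(n−1)/2}`. -/
theorem Lnn_apply_pow (q : ℂ) (hq : q ≠ 0) (f P : LaurentSeries ℂ) (hP : P ≠ 0)
    (hf : Xl * sigmaq q f + f = P) (n : ℕ) (hn : 1 ≤ n) :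
    Lnk q P n n (f ^ n) = (-1 : LaurentSeries ℂ) ^ (n * (n - 1) / 2) := by
  have hveq := vv_eq q hq f P hf
  have hw : ∀ j, Xl * sigmaq q (vv q f j) = -(vv q f (j + 1)) := by
    intro j; rw [vv_succ]; ring
  have key : ∀ k, k ≤ n →
      Lnk q P n k (f ^ n) = (-1 : LaurentSeries ℂ) ^ eeaux n k * hh (vv q f) k (n - k) := by
    intro k
    induction k with
    | zero =>
      intro _
      simp [Lnk, eeaux, hh_zero_var, vv_zero]
    | succ k ih =>
      intro hk1
      have hkn : k < n := hk1
      have ihh := ih (le_of_lt hkn)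
      have hm : n - k = (n - k - 1) + 1 := by omega
      have hne := Pq_ne_zero q hq P hP k
      have hA := hh_sigma q hq (vv q f) hw k (n - k)
      have hD := hh_diff (vv q f) k (n - k - 1)
      have hPq : vv q f (k + 1) - vv q f 0 = -(Pq q P (k + 1)) := by
        rw [hveq, hveq, Pq_zero]; ring
      rw [show Lnk q P n (k + 1) (f ^ n) = (Pq q P (k + 1))⁻¹ *
        (Xl ^ (n - k) * sigmaq q (Lnk q P n k (f ^ n))
          - (-1 : LaurentSeries ℂ) ^ (n - k) * Lnk q P n k (f ^ n)) from rfl]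
      rw [ihh]
      have hsig : sigmaq q ((-1 : LaurentSeries ℂ) ^ eeaux n k * hh (vv q f) k (n - k))
          = (-1 : LaurentSeries ℂ) ^ eeaux n k * sigmaq q (hh (vv q f) k (n - k)) := by
        have : ∀ x, sigmaq q x = sigmaR q hq x := fun _ => rfl
        rw [this, map_mul, map_pow, map_neg, map_one]
        rfl
      rw [hsig]
      rw [← hm] at hD
      have hbr : Xl ^ (n - k) * ((-1 : LaurentSeries ℂ) ^ eeaux n k * sigmaq q (hh (vv q f) k (n - k)))
          - (-1 : LaurentSeries ℂ) ^ (n - k) * ((-1 : LaurentSeries ℂ) ^ eeaux n k * hh (vv q f) k (n - k))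
          = Pq q P (k + 1) *
            ((-1 : LaurentSeries ℂ) ^ eeaux n (k + 1) * hh (vv q f) (k + 1) (n - (k + 1))) := by
        rw [show eeaux n (k + 1) = eeaux n k + (n - k) + 1 from rfl,
          show n - (k + 1) = n - k - 1 by omega]
        rw [pow_add, pow_add, pow_one]
        linear_combination ((-1 : LaurentSeries ℂ) ^ eeaux n k) * hA
          + ((-1 : LaurentSeries ℂ) ^ eeaux n k * (-1 : LaurentSeries ℂ) ^ (n - k)) * hD
          + ((-1 : LaurentSeries ℂ) ^ eeaux n k * (-1 : LaurentSeries ℂ) ^ (n - k) * hh (vv q f) (k + 1) (n - k - 1)) * hPq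
      rw [hbr, inv_mul_cancel_left₀ hne]
  have hfin := key n le_rfl
  rw [Nat.sub_self, hh_zero, mul_one] at hfin
  rw [hfin]
  -- parity bookkeeping
  have hAk : ∀ k, k ≤ n → 2 * eeaux n k + k * k = 2 * k * n + 3 * k := by
    intro k
    induction k with
    | zero => intro _; simp [eeaux]
    | succ k ih =>
      intro h
      have h1 := ih (by omega)
      obtain ⟨d, rfl⟩ : ∃ d, n = k + d := ⟨n - k, by omega⟩
      rw [show eeaux (k + d) (k + 1) = eeaux (k + d) k + ((k + d) - k) + 1 from rfl,
        Nat.add_sub_cancel_left]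
      zify at h1 ⊢
      linear_combination h1
  have h1 := hAk n le_rfl
  have h2t : 2 * (n * (n - 1) / 2) = n * (n - 1) := by
    refine Nat.mul_div_cancel' ?_
    obtain ⟨m, rfl⟩ : ∃ m, n = m + 1 := ⟨n - 1, by omega⟩
    simpa [Nat.add_sub_cancel, mul_comm] using (Nat.even_mul_succ_self m).two_dvd
  have h3 : n * (n - 1) + n = n * n := by
    obtain ⟨m, rfl⟩ : ∃ m, n = m + 1 := ⟨n - 1, by omega⟩
    simp [Nat.add_sub_cancel]; ring
  have hE : eeaux n n = n * (n - 1) / 2 + 2 * n := by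
    rw [mul_assoc] at h1
    set t := n * (n - 1) / 2 with ht
    set E := eeaux n n with hEdef
    generalize hb : n * (n - 1) = b at h2t h3
    generalize ha : n * n = a at h1 h3
    omega
  rw [hE, pow_add, pow_mul]
  norm_num


end
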